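/- Let (λ, x) be a Laplacian eigenpair of the generalized power hypergraph with loops built from G and d, with λ ≠ d(u) for every u ∈ V, and set U := {u ∈ V : x_{(u,1)} ≠ 0}. Then: (1) U is nonempty and every u ∈ U has a G-neighbor in U (so the induced subgraph G[U] has no isolated vertices); (2) x is nonzero at every vertex of every half edge 𝐮 with u ∈ U, and, setting ε_u := (Π_{p ∈ 𝐮} x_p)/x_{(u,1)}^s for u ∈ U and E := diag(ε_u)_{u∈U}, the vector (x_{(u,1)}^s)_{u∈U} is an eigenvector of the U×U complex matrix diag(d(u))_{u∈U} − E·(A(G)[U])·E with eigenvalue λ, where A(G)[U] is the principal submatrix indexed by U of the adjacency matrix of G. -/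

import Mathlib

open scoped BigOperators
open Matrix

attribute [local instance] Classical.propDecidable

/-- `(lam, x)` is a Laplacian eigenpair of the generalized power hypergraph (with loops)
built from the simple graph `G` and the degree function `d`. -/
def IsLapEigenpair {V : Type*} [Fintype V] [DecidableEq V] (k s : ℕ)
    (G : SimpleGraph V) [DecidableRel G.Adj]
    (d : V → ℕ) (lam : ℂ) (x : V × Fin s → ℂ) : Prop :=
  x ≠ 0 ∧ ∀ (u : V) (v : Fin s),
    ((d u : ℂ) - lam) * x (u, v) ^ (k - 1) =
      ∑ w ∈ G.neighborFinset u,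
        (∏ p ∈ Finset.univ.erase v, x (u, p)) * ∏ q : Fin s, x (w, q)

/-!
Since `λ ≠ d(u)`, the left side of the eigen-equation at a vertex `(u, v)` with `x (u, v) ≠ 0`
is nonzero, hence so are both factors of its right side: the product of `x` over `𝐮 ∖ {v}`,
which makes `x` nonzero on all of `𝐮`, and the sum over the neighbours `w` of the products of `x`
over `𝐰`, which yields a neighbour in `U`. Dividing the equation at `(u, 1)` by
`x_{(u,1)}^{s-1}` and writing `∏_{𝐰} x = ε_w x_{(w,1)}^s` for `w ∈ U` gives row `u` of the matrix
equation; neighbours outside `U` contribute nothing because `∏_{𝐰} x = 0` for them.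
-/

theorem Matrix.diagonal_mul_mul_diagonal_mulVec {n α : Type*} [Fintype n] [DecidableEq n]
    [CommSemiring α] (e : n → α) (A : Matrix n n α) (y : n → α) :
    (diagonal e * A * diagonal e) *ᵥ y = e * (A *ᵥ (e * y)) := by
  have hdiag : ∀ z : n → α, diagonal e *ᵥ z = e * z := fun z => funext (mulVec_diagonal e z)
  rw [← mulVec_mulVec, ← mulVec_mulVec, hdiag, hdiag]

theorem Matrix.submatrix_val_mulVec_restrict {ι α : Type*} [Fintype ι]
    [NonUnitalNonAssocSemiring α] {U : Set ι} [Fintype U] (A : Matrix ι ι α) (f : ι → α)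
    (hf : ∀ i ∉ U, f i = 0) (u : U) :
    (A.submatrix (↑) (↑) *ᵥ fun w : U => f w) u = (A *ᵥ f) u := by
  simp only [mulVec, dotProduct, submatrix_apply]
  rw [Finset.sum_set_coe (f := fun w => A u w * f w) U]
  refine Finset.sum_subset (Finset.subset_univ _) fun w _ hwU => ?_
  rw [hf w (by simpa using hwU), mul_zero]

namespace IsLapEigenpair

variable {V : Type*} [Fintype V] [DecidableEq V] {k s : ℕ} {G : SimpleGraph V}
  [DecidableRel G.Adj] {d : V → ℕ} {lam : ℂ} {x : V × Fin s → ℂ}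

theorem sub_mul_pow_eq_prod_erase_mul_sum (h : IsLapEigenpair k s G d lam x) (u : V)
    (v : Fin s) :
    ((d u : ℂ) - lam) * x (u, v) ^ (k - 1) =
      (∏ p ∈ Finset.univ.erase v, x (u, p)) * ∑ w ∈ G.neighborFinset u, ∏ q, x (w, q) := by
  rw [Finset.mul_sum]
  exact h.2 u v

theorem prod_erase_mul_sum_ne_zero (h : IsLapEigenpair k s G d lam x) {u : V} {v : Fin s}
    (hlam : lam ≠ d u) (hx : x (u, v) ≠ 0) :
    (∏ p ∈ Finset.univ.erase v, x (u, p)) * ∑ w ∈ G.neighborFinset u, ∏ q, x (w, q) ≠ 0 := by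
  rw [← h.sub_mul_pow_eq_prod_erase_mul_sum]
  exact mul_ne_zero (sub_ne_zero.2 hlam.symm) (pow_ne_zero _ hx)

theorem apply_ne_zero (h : IsLapEigenpair k s G d lam x) {u : V} {v : Fin s}
    (hlam : lam ≠ d u) (hx : x (u, v) ≠ 0) (j : Fin s) : x (u, j) ≠ 0 := by
  obtain rfl | hj := eq_or_ne j v
  · exact hx
  · exact Finset.prod_ne_zero_iff.1 (left_ne_zero_of_mul (h.prod_erase_mul_sum_ne_zero hlam hx))
      j (Finset.mem_erase.2 ⟨hj, Finset.mem_univ j⟩)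

theorem exists_adj_prod_ne_zero (h : IsLapEigenpair k s G d lam x) {u : V} {v : Fin s}
    (hlam : lam ≠ d u) (hx : x (u, v) ≠ 0) : ∃ w, G.Adj u w ∧ ∏ q, x (w, q) ≠ 0 := by
  obtain ⟨w, hw, hne⟩ := Finset.exists_ne_zero_of_sum_ne_zero
    (right_ne_zero_of_mul (h.prod_erase_mul_sum_ne_zero hlam hx))
  exact ⟨w, (G.mem_neighborFinset u w).1 hw, hne⟩

theorem sub_mul_pow_eq_div_mul_sum (h : IsLapEigenpair k s G d lam x) (hks : k = 2 * s) {u : V}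
    {v : Fin s} (hx : x (u, v) ≠ 0) :
    ((d u : ℂ) - lam) * x (u, v) ^ s =
      (∏ q, x (u, q)) / x (u, v) ^ s * ∑ w ∈ G.neighborFinset u, ∏ q, x (w, q) := by
  have hk : k - 1 = s + (s - 1) := by omega
  have hpow : x (u, v) ^ s = x (u, v) * x (u, v) ^ (s - 1) := by
    rw [← pow_succ']
    congr 1
    have := v.pos
    omega
  have key := h.sub_mul_pow_eq_prod_erase_mul_sum u v
  rw [hk, pow_add] at key
  rw [← Finset.mul_prod_erase _ _ (Finset.mem_univ v)]
  field_simp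
  linear_combination x (u, v) * key + ((d u : ℂ) - lam) * x (u, v) ^ s * hpow

end IsLapEigenpair

/-- Let `(λ, x)` be a Laplacian eigenpair of the generalized power hypergraph with loops built
from `G` and `d`, with `λ ≠ d u` for every `u`, and `U := {u | x_{(u,1)} ≠ 0}`. Then `U` is
nonempty, every `u ∈ U` has a `G`-neighbor in `U`, `x` is nonzero on every vertex of every half
edge `𝐮` with `u ∈ U`, and with `ε_u := (Π_{p ∈ 𝐮} x_p)/x_{(u,1)}^s` the vector
`(x_{(u,1)}^s)_{u ∈ U}` is an eigenvector of `diag(d)|_U − E·(A(G)[U])·E` with eigenvalue `λ`. -/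
theorem stmt2 {V : Type*} [Fintype V] [DecidableEq V] (k s : ℕ)
    (hk : 4 ≤ k) (hks : k = 2 * s) (G : SimpleGraph V) [DecidableRel G.Adj]
    (d : V → ℕ)
    (lam : ℂ) (x : V × Fin s → ℂ) (hpair : IsLapEigenpair k s G d lam x)
    (hlam : ∀ u : V, lam ≠ (d u : ℂ))
    (U : Set V) (hU : U = {u : V | x (u, (⟨0, by omega⟩ : Fin s)) ≠ 0})
    (eps : ↥U → ℂ)
    (heps : ∀ u : ↥U, eps u =
      (∏ p : Fin s, x (u.1, p)) / x (u.1, (⟨0, by omega⟩ : Fin s)) ^ s)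
    (y : ↥U → ℂ) (hy : ∀ u : ↥U, y u = x (u.1, (⟨0, by omega⟩ : Fin s)) ^ s) :
    U.Nonempty ∧
    (∀ u ∈ U, ∃ w ∈ U, G.Adj u w) ∧
    (∀ u ∈ U, ∀ j : Fin s, x (u, j) ≠ 0) ∧
    y ≠ 0 ∧
    (Matrix.diagonal (fun u : ↥U => (d u.1 : ℂ)) -
        Matrix.diagonal eps * (G.adjMatrix ℂ).submatrix Subtype.val Subtype.val *
          Matrix.diagonal eps) *ᵥ y = lam • y := by
  set v₀ : Fin s := ⟨0, by omega⟩
  have hmem (u : V) : u ∈ U ↔ x (u, v₀) ≠ 0 := by rw [hU]; rfl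
  obtain rfl : y = _ := funext hy
  have hall (u : V) (hu : u ∈ U) : ∀ j, x (u, j) ≠ 0 :=
    hpair.apply_ne_zero (hlam u) ((hmem u).1 hu)
  have hprod_off (w : V) (hw : w ∉ U) : ∏ q, x (w, q) = 0 :=
    Finset.prod_eq_zero (Finset.mem_univ v₀) (not_not.1 (hw ∘ (hmem w).2))
  have heps_mul : (eps * fun u => x (u.1, v₀) ^ s) = fun w => ∏ q, x (w.1, q) := by
    ext w
    rw [Pi.mul_apply, heps, div_mul_cancel₀ _ (pow_ne_zero s ((hmem w).1 w.2))]
  obtain ⟨⟨u₀, j₀⟩, hne⟩ := Function.ne_iff.mp hpair.1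
  have hu₀ : u₀ ∈ U := (hmem u₀).2 (hpair.apply_ne_zero (hlam u₀) hne v₀)
  refine ⟨⟨u₀, hu₀⟩, fun u hu => ?_, hall,
    fun hy₀ => pow_ne_zero s ((hmem u₀).1 hu₀) (congrFun hy₀ ⟨u₀, hu₀⟩), ?_⟩
  · obtain ⟨w, hadj, hw⟩ := hpair.exists_adj_prod_ne_zero (hlam u) ((hmem u).1 hu)
    exact ⟨w, of_not_not fun hwU => hw (hprod_off w hwU), hadj⟩
  · ext u
    rw [sub_mulVec, diagonal_mul_mul_diagonal_mulVec, heps_mul, Pi.sub_apply, Pi.mul_apply,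
      submatrix_val_mulVec_restrict _ (fun w => ∏ q, x (w, q)) hprod_off,
      SimpleGraph.adjMatrix_mulVec_apply]
    simp only [mulVec_diagonal, Pi.smul_apply, heps, smul_eq_mul]
    linear_combination hpair.sub_mul_pow_eq_div_mul_sum hks ((hmem u).1 u.2)
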